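/- arXiv:2104.10190 — 3 statements merged into one kernel-verified Lean document; each statement's English description precedes it below -/
import Mathlib

section
/- Let q and p be probability mass functions on ℕ with positive tail probabilities, and for each t define Bernoulli distributions q_{Δ_t} and p_{Δ_t} with success probabilities h^q_t = q(T=t | T ≥ t) and h^p_t = p(T=t | T ≥ t), respectively. Then the Kullback–Leibler divergence from q to p decomposes as D_KL(q ‖ p) = ∑_{t=0}^∞ q(T ≥ t) · D_KL(Bernoulli(h^q_t) ‖ Bernoulli(h^p_t)). -/
/-!
Write `Q t`, `P t` for the tail masses and `d x y = x log (x / y) + y - x ≥ 0` (`klTerm`). Since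
`Q t = q t + Q (t + 1)`, the chain rule for KL divergence across the split "stop at `t` or go on"
gives `Q t · KL(Ber (q t / Q t) ‖ Ber (p t / P t)) = d (q t) (p t) + d (Q (t+1)) (P (t+1)) - d (Q t) (P t)`,
so the `N`-th partial sum of the right-hand side is `∑_{t<N} d (q t) (p t) + d (Q N) (P N)`, as
`d (Q 0) (P 0) = d 1 1 = 0`. The log-sum inequality gives `0 ≤ d (Q N) (P N) ≤ ∑_{t≥N} d (q t) (p t)`,
which tends to `0` when the series of `d`'s converges; when it diverges, so does the right-hand
side, and both `tsum`s are `0`. Finally `∑ d (q t) (p t)` differs from `∑ q t log (q t / p t)` by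
`∑ (p t - q t) = 0`.
-/

open Real Filter Finset Topology

theorem summable_of_tsum_ne_zero {ι G : Type*} [AddCommMonoid G] [TopologicalSpace G] {f : ι → G}
    (h : ∑' i, f i ≠ 0) : Summable f :=
  by_contra fun hf => h (tsum_eq_zero_of_not_summable hf)

theorem tsum_nat_add_eq_add_tsum_succ {G : Type*} [AddCommGroup G] [TopologicalSpace G]
    [IsTopologicalAddGroup G] [T2Space G] {f : ℕ → G} (hf : Summable f) (t : ℕ) :
    ∑' i, f (t + i) = f t + ∑' i, f (t + 1 + i) := by
  have h : Summable fun i => f (t + i) := by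
    simpa only [add_comm t] using (summable_nat_add_iff t).2 hf
  simp only [h.tsum_eq_zero_add, add_zero, add_assoc, add_comm 1]

theorem tsum_eq_tsum_of_hasSum_sub_zero {ι G : Type*} [AddCommGroup G] [TopologicalSpace G]
    [IsTopologicalAddGroup G] [T2Space G] {f g : ι → G} (h : HasSum (fun i => f i - g i) 0) :
    ∑' i, f i = ∑' i, g i := by
  by_cases hg : Summable g
  · have hf : Summable f := by simpa using h.summable.add hg
    rw [← sub_eq_zero, ← hf.tsum_sub hg, h.tsum_eq]
  · have hf : ¬ Summable f := fun hf => hg (by simpa using hf.sub h.summable)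
    rw [tsum_eq_zero_of_not_summable hf, tsum_eq_zero_of_not_summable hg]

theorem tsum_eq_tsum_of_sum_range_eq_add {u v G : ℕ → ℝ} (hu : ∀ t, 0 ≤ u t) (hv : ∀ t, 0 ≤ v t)
    (hG : ∀ N, 0 ≤ G N) (hsum : ∀ N, ∑ t ∈ range N, v t = ∑ t ∈ range N, u t + G N)
    (hG_le : Summable u → ∀ N, G N ≤ ∑' i, u (N + i)) :
    ∑' t, v t = ∑' t, u t := by
  by_cases hus : Summable u
  · have hG_lim : Tendsto G atTop (𝓝 0) := by
      refine tendsto_of_tendsto_of_tendsto_of_le_of_le tendsto_const_nhds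
        ((tendsto_sum_nat_add u).congr fun N => ?_) hG (hG_le hus)
      simp only [add_comm]
    refine ((hasSum_iff_tendsto_nat_of_nonneg hv _).2 ?_).tsum_eq
    simpa only [hsum, add_zero] using hus.hasSum.tendsto_sum_nat.add hG_lim
  · have hvs : ¬ Summable v := fun hvs => hus <| summable_of_sum_range_le hu fun N =>
      (le_add_of_nonneg_right (hG N)).trans <|
        (hsum N).symm.le.trans (hvs.sum_le_tsum _ fun t _ => hv t)
    rw [tsum_eq_zero_of_not_summable hvs, tsum_eq_zero_of_not_summable hus]

/-- `y * klFun (x / y)`, the summand of the KL divergence between unnormalised measures; unlike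
`x * log (x / y)` it is nonnegative. -/
noncomputable def klTerm (x y : ℝ) : ℝ := x * log (x / y) + y - x

noncomputable def bernoulliKL (a b : ℝ) : ℝ :=
  a * log (a / b) + (1 - a) * log ((1 - a) / (1 - b))

lemma klTerm_self (x : ℝ) : klTerm x x = 0 := by simp [klTerm]

lemma klTerm_nonneg {x y : ℝ} (hx : 0 ≤ x) (hy : 0 < y) : 0 ≤ klTerm x y := by
  have h : klTerm x y = y * InformationTheory.klFun (x / y) := by
    rw [InformationTheory.klFun, klTerm]; field_simp
  rw [h]
  exact mul_nonneg hy.le (InformationTheory.klFun_nonneg (by positivity))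

lemma bernoulliKL_eq_add (a b : ℝ) :
    bernoulliKL a b = klTerm a b + klTerm (1 - a) (1 - b) := by
  unfold bernoulliKL klTerm; ring

lemma bernoulliKL_nonneg {a b : ℝ} (ha₀ : 0 ≤ a) (ha₁ : a ≤ 1) (hb₀ : 0 < b) (hb₁ : b < 1) :
    0 ≤ bernoulliKL a b := by
  rw [bernoulliKL_eq_add]
  exact add_nonneg (klTerm_nonneg ha₀ hb₀) (klTerm_nonneg (by linarith) (by linarith))

lemma mul_log_add_sub_mul_le_klTerm {x y c : ℝ} (hx : 0 < x) (hy : 0 < y) (hc : 0 < c) :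
    x * log c + (1 - c) * y ≤ klTerm x y := by
  have h := klTerm_nonneg hx.le (mul_pos hc hy)
  rw [klTerm, div_mul_eq_div_div_swap, log_div (by positivity) hc.ne'] at h
  unfold klTerm
  nlinarith

/-- The log-sum inequality. -/
theorem klTerm_le_tsum {ι : Type*} {x y : ι → ℝ} {X Y : ℝ} (hx : ∀ i, 0 < x i)
    (hy : ∀ i, 0 < y i) (hX : HasSum x X) (hY : HasSum y Y) (hX₀ : 0 < X) (hY₀ : 0 < Y)
    (hxy : Summable fun i => klTerm (x i) (y i)) :
    klTerm X Y ≤ ∑' i, klTerm (x i) (y i) := by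
  have hlin : HasSum (fun i => x i * log (X / Y) + (1 - X / Y) * y i)
      (X * log (X / Y) + (1 - X / Y) * Y) :=
    (hX.mul_right _).add (hY.mul_left _)
  have hval : X * log (X / Y) + (1 - X / Y) * Y = klTerm X Y := by
    unfold klTerm; field_simp; ring
  rw [← hval]
  exact hasSum_le (fun i => mul_log_add_sub_mul_le_klTerm (hx i) (hy i) (div_pos hX₀ hY₀))
    hlin hxy.hasSum

section ChainRule

variable {x x' y y' : ℝ}

lemma mul_bernoulliKL_div_add (hx : 0 < x) (hx' : 0 < x') (hy : 0 < y) (hy' : 0 < y') :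
    (x + x') * bernoulliKL (x / (x + x')) (y / (y + y'))
      = klTerm x y + klTerm x' y' - klTerm (x + x') (y + y') := by
  have h₁ : 1 - x / (x + x') = x' / (x + x') := by field_simp; ring
  have h₂ : 1 - y / (y + y') = y' / (y + y') := by field_simp; ring
  have hlog {a b s t : ℝ} (ha : 0 < a) (hb : 0 < b) (hs : 0 < s) (ht : 0 < t) :
      log (a / s / (b / t)) = log (a / b) - log (s / t) := by
    rw [div_div_div_comm, log_div (by positivity) (by positivity)]
  unfold bernoulliKL klTerm
  rw [h₁, h₂, hlog hx hy (by positivity) (by positivity),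
    hlog hx' hy' (by positivity) (by positivity)]
  generalize log (x / y) = A, log (x' / y') = B, log ((x + x') / (y + y')) = C
  field_simp
  ring

lemma mul_bernoulliKL_div_add_nonneg (hx : 0 < x) (hx' : 0 < x') (hy : 0 < y) (hy' : 0 < y') :
    0 ≤ (x + x') * bernoulliKL (x / (x + x')) (y / (y + y')) := by
  refine mul_nonneg (by positivity) (bernoulliKL_nonneg (by positivity) ?_ (by positivity) ?_)
  · rw [div_le_one (by positivity)]; linarith
  · rw [div_lt_one (by positivity)]; linarith

end ChainRule

theorem kl_eq_sum_tail_bernoulli_kl_general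
    (q p tq tp : ℕ → ℝ)
    (hq0 : ∀ t, 0 < q t) (hp0 : ∀ t, 0 < p t)
    (hqsum : ∑' t, q t = 1) (hpsum : ∑' t, p t = 1)
    (htq : ∀ t, tq t = ∑' i, q (t + i)) (htp : ∀ t, tp t = ∑' i, p (t + i))
    (htqpos : ∀ t, 0 < tq t) (htppos : ∀ t, 0 < tp t) :
    ∑' t, q t * Real.log (q t / p t)
      = ∑' t, tq t *
          ((q t / tq t) * Real.log ((q t / tq t) / (p t / tp t)) +
           (1 - q t / tq t) * Real.log ((1 - q t / tq t) / (1 - p t / tp t))) := by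
  change _ = ∑' t, tq t * bernoulliKL (q t / tq t) (p t / tp t)
  have hqs : Summable q := summable_of_tsum_ne_zero (by simp [hqsum])
  have hps : Summable p := summable_of_tsum_ne_zero (by simp [hpsum])
  have hq_succ (t : ℕ) : tq t = q t + tq (t + 1) := by
    rw [htq, htq, tsum_nat_add_eq_add_tsum_succ hqs]
  have hp_succ (t : ℕ) : tp t = p t + tp (t + 1) := by
    rw [htp, htp, tsum_nat_add_eq_add_tsum_succ hps]
  have hchain (t : ℕ) : tq t * bernoulliKL (q t / tq t) (p t / tp t)
      = klTerm (q t) (p t) + (klTerm (tq (t + 1)) (tp (t + 1)) - klTerm (tq t) (tp t)) := by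
    rw [hq_succ t, hp_succ t, mul_bernoulliKL_div_add (hq0 t) (htqpos _) (hp0 t) (htppos _),
      ← hq_succ, ← hp_succ]
    ring
  have hdiff : HasSum (fun t => q t * log (q t / p t) - klTerm (q t) (p t)) 0 := by
    have hfun : (fun t => q t * log (q t / p t) - klTerm (q t) (p t)) = fun t => q t - p t := by
      funext t; unfold klTerm; ring
    have h := hqs.hasSum.sub hps.hasSum
    rwa [hqsum, hpsum, sub_self, ← hfun] at h
  rw [tsum_eq_tsum_of_hasSum_sub_zero hdiff]
  refine (tsum_eq_tsum_of_sum_range_eq_add (G := fun N => klTerm (tq N) (tp N))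
    (fun t => klTerm_nonneg (hq0 t).le (hp0 t)) (fun t => ?_)
    (fun N => klTerm_nonneg (htqpos N).le (htppos N)) (fun N => ?_) (fun hs N => ?_)).symm
  · rw [hq_succ t, hp_succ t]
    exact mul_bernoulliKL_div_add_nonneg (hq0 t) (htqpos _) (hp0 t) (htppos _)
  · have h₀ : klTerm (tq 0) (tp 0) = 0 := by simp [htq, htp, hqsum, hpsum, klTerm_self]
    rw [sum_congr rfl fun t _ => hchain t, sum_add_distrib,
      sum_range_sub (fun N => klTerm (tq N) (tp N)), h₀, sub_zero]
  · have htail {f : ℕ → ℝ} (hf : Summable f) : Summable fun i => f (N + i) :=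
      hf.comp_injective (add_right_injective N)
    exact klTerm_le_tsum (fun i => hq0 _) (fun i => hp0 _) (htq N ▸ (htail hqs).hasSum)
      (htp N ▸ (htail hps).hasSum) (htqpos N) (htppos N) (htail hs)

/-- KL divergence between pmfs on ℕ decomposes into tail-weighted
Bernoulli KL divergences of the hazard rates. -/
theorem kl_eq_sum_tail_bernoulli_kl
    (q p tq tp : ℕ → ℝ)
    (hq0 : ∀ t, 0 < q t) (hp0 : ∀ t, 0 < p t)
    (hqsum : ∑' t, q t = 1) (hpsum : ∑' t, p t = 1)
    (htq : ∀ t, tq t = ∑' i, q (t + i)) (htp : ∀ t, tp t = ∑' i, p (t + i))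
    (htqpos : ∀ t, 0 < tq t) (htppos : ∀ t, 0 < tp t)
    (hsum1 : Summable (fun t => q t * Real.log (q t / p t)))
    (hsum2 : Summable (fun t => tq t *
      ((q t / tq t) * Real.log ((q t / tq t) / (p t / tp t)) +
       (1 - q t / tq t) * Real.log ((1 - q t / tq t) / (1 - p t / tp t))))) :
    ∑' t, q t * Real.log (q t / p t)
      = ∑' t, tq t *
          ((q t / tq t) * Real.log ((q t / tq t) / (p t / tp t)) +
           (1 - q t / tq t) * Real.log ((1 - q t / tq t) / (1 - p t / tp t))) :=
  kl_eq_sum_tail_bernoulli_kl_general q p tq tp hq0 hp0 hqsum hpsum htq htp htqpos htppos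
end

section
/- Let (S, A) be finite sets, let π, π' be stochastic policies (functions S → Prob(A)), and let Q^π be the fixed point of the KL-regularized Bellman operator for π with transition-dependent discount q(s,a) ∈ [0, γ_max], γ_max < 1. If for every state s, E_{a ∼ π'(·|s)}[Q^π(s,a)] − KL(π'(·|s) ‖ ρ(·|s)) ≥ E_{a ∼ π(·|s)}[Q^π(s,a)] − KL(π(·|s) ‖ ρ(·|s)), where ρ is a fixed prior policy with full support, then Q^{π'}(s,a) ≥ Q^π(s,a) for all (s,a). -/
/-- KL divergence between two pmfs on a finite action set. -/
noncomputable def klA {A : Type} [Fintype A] (μ ν : A → ℝ) : ℝ :=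
  ∑ a, μ a * Real.log (μ a / ν a)

/-- KL-regularized policy improvement with a state-action-dependent
discount: if `π'` improves the KL-regularized objective w.r.t. `Q^π` at every state,
then `Q^{π'} ≥ Q^π` pointwise. -/
theorem kl_regularized_policy_improvement
    (S A : Type) [Fintype S] [Fintype A]
    (γmax : ℝ) (hγ0 : 0 ≤ γmax) (hγ1 : γmax < 1)
    (r : S → A → ℝ)
    (p : S → A → S → ℝ)
    (hp0 : ∀ s a s', 0 ≤ p s a s') (hp1 : ∀ s a, ∑ s', p s a s' = 1)
    (q : S → A → ℝ) (hq : ∀ s a, q s a ∈ Set.Icc (0:ℝ) γmax)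
    (π π' ρ : S → A → ℝ)
    (hπ0 : ∀ s a, 0 ≤ π s a) (hπ1 : ∀ s, ∑ a, π s a = 1)
    (hπ'0 : ∀ s a, 0 ≤ π' s a) (hπ'1 : ∀ s, ∑ a, π' s a = 1)
    (hρ0 : ∀ s a, 0 < ρ s a) (hρ1 : ∀ s, ∑ a, ρ s a = 1)
    (Qπ Qπ' : S → A → ℝ)
    (hQπ : ∀ s a, Qπ s a = r s a + q s a *
        ∑ s', p s a s' * ((∑ a', π s' a' * Qπ s' a') - klA (π s') (ρ s')))
    (hQπ' : ∀ s a, Qπ' s a = r s a + q s a *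
        ∑ s', p s a s' * ((∑ a', π' s' a' * Qπ' s' a') - klA (π' s') (ρ s')))
    (himp : ∀ s,
        (∑ a, π s a * Qπ s a) - klA (π s) (ρ s)
          ≤ (∑ a, π' s a * Qπ s a) - klA (π' s) (ρ s)) :
    ∀ s a, Qπ s a ≤ Qπ' s a := by
  intro s a
  -- maximize D over the (nonempty) product
  have hne : (Finset.univ ×ˢ Finset.univ : Finset (S × A)).Nonempty := ⟨(s, a), by simp⟩
  obtain ⟨⟨s₀, a₀⟩, -, hmax⟩ :=
    Finset.exists_max_image (Finset.univ ×ˢ Finset.univ)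
      (fun x : S × A => Qπ x.1 x.2 - Qπ' x.1 x.2) hne
  set M : ℝ := Qπ s₀ a₀ - Qπ' s₀ a₀ with hMdef
  have hmax' : ∀ s' a', Qπ s' a' - Qπ' s' a' ≤ M := by
    intro s' a'
    exact hmax (s', a') (by simp)
  -- the per-state error term
  set E : S → ℝ := fun s' =>
    ((∑ a', π s' a' * Qπ s' a') - klA (π s') (ρ s'))
      - ((∑ a', π' s' a' * Qπ' s' a') - klA (π' s') (ρ s')) with hEdef
  have hE : ∀ s', E s' ≤ max M 0 := by
    intro s'
    have h1 : E s' ≤ ∑ a', π' s' a' * (Qπ s' a' - Qπ' s' a') := by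
      have h2 : ∑ a', π' s' a' * (Qπ s' a' - Qπ' s' a')
          = (∑ a', π' s' a' * Qπ s' a') - (∑ a', π' s' a' * Qπ' s' a') := by
        rw [← Finset.sum_sub_distrib]
        exact Finset.sum_congr rfl fun _ _ => by ring
      have := himp s'
      simp only [hEdef]
      linarith
    have h3 : ∑ a', π' s' a' * (Qπ s' a' - Qπ' s' a') ≤ ∑ a', π' s' a' * M := by
      refine Finset.sum_le_sum fun a' _ => ?_
      exact mul_le_mul_of_nonneg_left (hmax' s' a') (hπ'0 s' a')
    have h4 : ∑ a', π' s' a' * M = M := by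
      rw [← Finset.sum_mul, hπ'1, one_mul]
    have : E s' ≤ M := by linarith
    exact this.trans (le_max_left _ _)
  -- M = q s₀ a₀ * ∑ p * E
  have hkey : M = q s₀ a₀ * ∑ s', p s₀ a₀ s' * E s' := by
    rw [hMdef, hQπ, hQπ']
    have : ∑ s', p s₀ a₀ s' * E s'
        = (∑ s', p s₀ a₀ s' * ((∑ a', π s' a' * Qπ s' a') - klA (π s') (ρ s')))
          - ∑ s', p s₀ a₀ s' * ((∑ a', π' s' a' * Qπ' s' a') - klA (π' s') (ρ s')) := by
      rw [← Finset.sum_sub_distrib]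
      exact Finset.sum_congr rfl fun _ _ => by simp only [hEdef]; ring
    rw [this]; ring
  obtain ⟨hq0, hqγ⟩ := hq s₀ a₀
  have hMle : M ≤ γmax * max M 0 := by
    have hsum : ∑ s', p s₀ a₀ s' * E s' ≤ max M 0 := by
      calc ∑ s', p s₀ a₀ s' * E s'
          ≤ ∑ s', p s₀ a₀ s' * max M 0 :=
            Finset.sum_le_sum fun s' _ =>
              mul_le_mul_of_nonneg_left (hE s') (hp0 s₀ a₀ s')
        _ = max M 0 := by rw [← Finset.sum_mul, hp1, one_mul]
    calc M = q s₀ a₀ * ∑ s', p s₀ a₀ s' * E s' := hkey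
      _ ≤ q s₀ a₀ * max M 0 := mul_le_mul_of_nonneg_left hsum hq0
      _ ≤ γmax * max M 0 := mul_le_mul_of_nonneg_right hqγ (le_max_right _ _)
  have hM0 : M ≤ 0 := by
    by_contra h
    push_neg at h
    rw [max_eq_left h.le] at hMle
    nlinarith
  linarith [hmax' s a]
end

section
/- Let γ ∈ (0,1), and let p_T be geometric with parameter 1−γ. If the variational distribution over termination time equals the prior (q_T = p_T) and the action prior is uniform on a finite action set A, then the outcome-driven Q-recursion Q(s,a) = (1−γ) log ℓ(s,a) + γ E_{s'∼p(·|s,a)}[ E_{a'∼π(·|s')}[Q(s',a')] + H(π(·|s')) ] − γ log|A| coincides, up to the constant −γ log |A|/(1−γ) added to Q and rescaling of the reward by (1−γ), with the entropy-regularized (soft) Bellman recursion with reward r(s,a) = log ℓ(s,a) and discount γ. -/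
/-! Since `p` and `π` are stochastic, shifting `Q` by a constant `c` shifts the soft backup
`E_{s'}[E_{a'∼π}[Q(s',a')] + H(π(·|s'))]` by exactly `c`. The constant
`c = γ log|A| / (1 − γ)` is the solution of `c − γ log|A| = γ c`, so it absorbs the
`−γ log|A|` term of the outcome-driven recursion. -/

open Finset

theorem sum_mul_add_const_of_sum_eq_one {ι R : Type*} [Fintype ι] [Semiring R] {w : ι → R}
    (hw : ∑ i, w i = 1) (f : ι → R) (c : R) :
    ∑ i, w i * (f i + c) = ∑ i, w i * f i + c := by
  simp only [mul_add, sum_add_distrib, ← sum_mul, hw, one_mul]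

noncomputable def softQBackup {S A : Type*} [Fintype S] [Fintype A] (p : S → A → S → ℝ)
    (π : S → A → ℝ) (H : (A → ℝ) → ℝ) (Q : S → A → ℝ) (s : S) (a : A) : ℝ :=
  ∑ s', p s a s' * ((∑ a', π s' a' * Q s' a') + H (π s'))

theorem softQBackup_add_const {S A : Type*} [Fintype S] [Fintype A] {p : S → A → S → ℝ}
    {π : S → A → ℝ} (hp1 : ∀ s a, ∑ s', p s a s' = 1) (hπ1 : ∀ s, ∑ a, π s a = 1)
    (H : (A → ℝ) → ℝ) (Q : S → A → ℝ) (c : ℝ) (s : S) (a : A) :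
    softQBackup p π H (fun s a => Q s a + c) s a = softQBackup p π H Q s a + c := by
  simp only [softQBackup, sum_mul_add_const_of_sum_eq_one (hπ1 _), add_right_comm _ c]
  exact sum_mul_add_const_of_sum_eq_one (hp1 s a) _ c

theorem outcome_driven_reduces_to_soft_bellman_general
    (S A : Type) [Fintype S] [Fintype A]
    (γ : ℝ) (hγ : γ ∈ Set.Ioo (0:ℝ) 1)
    (ℓ : S → A → ℝ)
    (p : S → A → S → ℝ)
    (hp1 : ∀ s a, ∑ s', p s a s' = 1)
    (π : S → A → ℝ)
    (hπ1 : ∀ s, ∑ a, π s a = 1)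
    (H : (A → ℝ) → ℝ)
    (Q : S → A → ℝ)
    -- outcome-driven recursion with geometric q_T = p_T and uniform action prior
    (hQ : ∀ s a, Q s a = (1 - γ) * Real.log (ℓ s a)
        + γ * (∑ s', p s a s' * ((∑ a', π s' a' * Q s' a') + H (π s')))
        - γ * Real.log (Fintype.card A : ℝ))
    (Qsoft : S → A → ℝ)
    (hQsoft : ∀ s a, Qsoft s a = Q s a + γ * Real.log (Fintype.card A : ℝ) / (1 - γ)) :
    -- soft Bellman recursion with reward (1−γ)·log ℓ and discount γ
    ∀ s a, Qsoft s a = (1 - γ) * Real.log (ℓ s a)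
        + γ * ∑ s', p s a s' * ((∑ a', π s' a' * Qsoft s' a') + H (π s')) := by
  intro s a
  have hγ1 : 1 - γ ≠ 0 := sub_ne_zero.mpr hγ.2.ne'
  have hshift : softQBackup p π H Qsoft s a
      = softQBackup p π H Q s a + γ * Real.log (Fintype.card A) / (1 - γ) := by
    rw [← softQBackup_add_const hp1 hπ1, show Qsoft = _ from funext₂ hQsoft]
  change Qsoft s a = (1 - γ) * Real.log (ℓ s a) + γ * softQBackup p π H Qsoft s a
  rw [hshift, hQsoft, hQ]
  change _ + γ * softQBackup p π H Q s a - _ + _ = _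
  field_simp
  ring

/-- with a geometric termination prior (`q_T = p_T`, parameter `1−γ`)
and a uniform action prior on a finite action set `A`, the outcome-driven
Q-recursion, after adding the constant `γ log|A|/(1−γ)` to `Q`, satisfies the
entropy-regularized (soft) Bellman recursion with reward `(1−γ) log ℓ(s,a)`
and discount `γ`. -/
theorem outcome_driven_reduces_to_soft_bellman
    (S A : Type) [Fintype S] [Fintype A] [Nonempty A]
    (γ : ℝ) (hγ : γ ∈ Set.Ioo (0:ℝ) 1)
    (ℓ : S → A → ℝ) (hℓ : ∀ s a, 0 < ℓ s a)
    (p : S → A → S → ℝ)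
    (hp0 : ∀ s a s', 0 ≤ p s a s') (hp1 : ∀ s a, ∑ s', p s a s' = 1)
    (π : S → A → ℝ)
    (hπ0 : ∀ s a, 0 ≤ π s a) (hπ1 : ∀ s, ∑ a, π s a = 1)
    (H : (A → ℝ) → ℝ) (hH : ∀ μ, H μ = -∑ a, μ a * Real.log (μ a))
    (Q : S → A → ℝ)
    -- outcome-driven recursion with geometric q_T = p_T and uniform action prior
    (hQ : ∀ s a, Q s a = (1 - γ) * Real.log (ℓ s a)
        + γ * (∑ s', p s a s' * ((∑ a', π s' a' * Q s' a') + H (π s')))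
        - γ * Real.log (Fintype.card A : ℝ))
    (Qsoft : S → A → ℝ)
    (hQsoft : ∀ s a, Qsoft s a = Q s a + γ * Real.log (Fintype.card A : ℝ) / (1 - γ)) :
    -- soft Bellman recursion with reward (1−γ)·log ℓ and discount γ
    ∀ s a, Qsoft s a = (1 - γ) * Real.log (ℓ s a)
        + γ * ∑ s', p s a s' * ((∑ a', π s' a' * Qsoft s' a') + H (π s')) :=
  outcome_driven_reduces_to_soft_bellman_general S A γ hγ ℓ p hp1 π hπ1 H Q hQ Qsoft hQsoft
end
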